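/- (Theorem 3, η-coordinates) For every η ∈ U and all x, y ∈ S⁺, the second partial derivative of φ satisfies ∂²φ(η)/∂η(x)∂η(y) = Σ_{s∈S} μ(s,x) μ(s,y) p_η(s)^{-1}. -/

import Mathlib

/- Along the coordinate line `t ↦ η[x ↦ t]`, every `p_η(s)` is affine in `t` with slope `μ(s,x)`
(the only `η`-term of `p_η(s)` that moves is `μ(s,x) η(x)`, and `μ(s,x) = 0` unless `s ≤ x`).
Hence `∂φ/∂η(y) = Σ_s μ(s,y) (log p_η(s) + 1)` on all of `U`, and since `U` is open this formula
may be differentiated once more along `η(x)`, giving `Σ_s μ(s,y) μ(s,x) / p_η(s)`. -/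

local instance {S : Type*} [PartialOrder S] [DecidableEq S]
    [DecidableRel ((· ≤ ·) : S → S → Prop)] :
    DecidableRel ((· < ·) : S → S → Prop) :=
  fun a b => decidable_of_iff (a ≤ b ∧ a ≠ b) lt_iff_le_and_ne.symm

/-- The extension of `η : ℝ^{S⁺}` to `S` with `η(⊥) = 1`. -/
noncomputable def etaBar {S : Type*} [PartialOrder S] [OrderBot S] [DecidableEq S]
    (η : {x : S // x ≠ ⊥} → ℝ) (s : S) : ℝ :=
  if h : s = ⊥ then 1 else η ⟨s, h⟩

/-- `p_η(x) = Σ_{s ≥ x} μ(x,s) η(s)`, where `η(⊥) = 1`. -/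
noncomputable def pEta {S : Type*} [Fintype S] [PartialOrder S] [OrderBot S] [DecidableEq S]
    [DecidableRel ((· ≤ ·) : S → S → Prop)]
    (mu : S → S → ℤ) (η : {x : S // x ≠ ⊥} → ℝ) (x : S) : ℝ :=
  ∑ s ∈ Finset.univ.filter (fun s => x ≤ s), (mu x s : ℝ) * etaBar η s

/-- `φ(η) = Σ_{x∈S} p_η(x) log p_η(x)`. -/
noncomputable def phi {S : Type*} [Fintype S] [PartialOrder S] [OrderBot S] [DecidableEq S]
    [DecidableRel ((· ≤ ·) : S → S → Prop)]
    (mu : S → S → ℤ) (η : {x : S // x ≠ ⊥} → ℝ) : ℝ :=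
  ∑ x : S, pEta mu η x * Real.log (pEta mu η x)

/-- Partial derivative of a function `f : ℝ^{S⁺} → ℝ` with respect to the coordinate `x`. -/
noncomputable def pd {S : Type*} [Fintype S] [PartialOrder S] [OrderBot S] [DecidableEq S]
    (f : ({x : S // x ≠ ⊥} → ℝ) → ℝ) (x : {x : S // x ≠ ⊥})
    (η : {x : S // x ≠ ⊥} → ℝ) : ℝ :=
  deriv (fun t => f (Function.update η x t)) (η x)

open Filter Topology

section AffineLine

lemma hasDerivAt_add_mul_sub (a c t₀ : ℝ) : HasDerivAt (fun t => a + c * (t - t₀)) c t₀ := by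
  simpa using (((hasDerivAt_id t₀).sub_const t₀).const_mul c).const_add a

variable {ι : Type*} [Fintype ι] (a c : ι → ℝ) (t₀ : ℝ)

lemma hasDerivAt_sum_mul_log_affine (ha : ∀ s, 0 < a s) :
    HasDerivAt (fun t => ∑ s, (a s + c s * (t - t₀)) * Real.log (a s + c s * (t - t₀)))
      (∑ s, c s * (Real.log (a s) + 1)) t₀ := by
  refine HasDerivAt.fun_sum fun s _ => ?_
  have hline := hasDerivAt_add_mul_sub (a s) (c s) t₀
  have hmul_log := (Real.hasDerivAt_mul_log (x := a s + c s * (t₀ - t₀))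
    (by simpa using (ha s).ne')).comp t₀ hline
  simp only [sub_self, mul_zero, add_zero] at hmul_log
  exact hmul_log.congr_deriv (mul_comm _ _)

lemma hasDerivAt_sum_mul_log_add_one_affine (d : ι → ℝ) (ha : ∀ s, 0 < a s) :
    HasDerivAt (fun t => ∑ s, d s * (Real.log (a s + c s * (t - t₀)) + 1))
      (∑ s, c s * d s * (a s)⁻¹) t₀ := by
  refine HasDerivAt.fun_sum fun s _ => ?_
  have hline := hasDerivAt_add_mul_sub (a s) (c s) t₀
  have hlog := hline.log (by simpa using (ha s).ne')
  simp only [sub_self, mul_zero, add_zero] at hlog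
  exact ((hlog.add_const 1).const_mul (d s)).congr_deriv (by ring)

end AffineLine

section Extension

variable {S : Type*} [PartialOrder S] [OrderBot S] [DecidableEq S]

lemma etaBar_coe (η : {x : S // x ≠ ⊥} → ℝ) (x : {x : S // x ≠ ⊥}) : etaBar η x = η x :=
  dif_neg x.2

lemma etaBar_update (η : {x : S // x ≠ ⊥} → ℝ) (x : {x : S // x ≠ ⊥}) (t : ℝ) :
    etaBar (Function.update η x t) = Function.update (etaBar η) (x : S) t := by
  funext s
  by_cases hs : s = ⊥
  · subst hs
    simp [etaBar, Function.update_of_ne (Ne.symm x.2)]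
  · rcases eq_or_ne s x with rfl | hsx
    · simp [etaBar_coe]
    · have hsx' : (⟨s, hs⟩ : {x : S // x ≠ ⊥}) ≠ x := fun h => hsx (congrArg Subtype.val h)
      simp [etaBar, hs, Function.update_of_ne hsx, Function.update_of_ne hsx']

end Extension

section Moebius

variable {S : Type*} [Fintype S] [PartialOrder S] [OrderBot S] [DecidableEq S]
  [DecidableRel ((· ≤ ·) : S → S → Prop)] {mu : S → S → ℤ}

lemma pEta_update (hmu_nle : ∀ x y : S, ¬ x ≤ y → mu x y = 0) (η : {x : S // x ≠ ⊥} → ℝ)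
    (x : {x : S // x ≠ ⊥}) (t : ℝ) (s : S) :
    pEta mu (Function.update η x t) s = pEta mu η s + mu s x * (t - η x) := by
  have hterm : ∀ u : S, (mu s u : ℝ) * Function.update (etaBar η) (x : S) t u
      = mu s u * etaBar η u + if u = x then mu s u * (t - η x) else 0 := by
    intro u
    rw [Function.update_apply]
    split_ifs with hu
    · subst hu; rw [etaBar_coe]; ring
    · rw [add_zero]
  simp only [pEta, etaBar_update, hterm, Finset.sum_add_distrib, Finset.sum_ite_eq',
    Finset.mem_filter, Finset.mem_univ, true_and]
  split_ifs with hsx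
  · rfl
  · simp [hmu_nle s x hsx]

lemma phi_update (hmu_nle : ∀ x y : S, ¬ x ≤ y → mu x y = 0) (η : {x : S // x ≠ ⊥} → ℝ)
    (y : {x : S // x ≠ ⊥}) (t : ℝ) :
    phi mu (Function.update η y t) = ∑ s, (pEta mu η s + mu s y * (t - η y)) *
      Real.log (pEta mu η s + mu s y * (t - η y)) := by
  simp only [phi, pEta_update hmu_nle]

lemma pd_phi (hmu_nle : ∀ x y : S, ¬ x ≤ y → mu x y = 0) {η : {x : S // x ≠ ⊥} → ℝ}
    (hU : ∀ s, 0 < pEta mu η s) (y : {x : S // x ≠ ⊥}) :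
    pd (phi mu) y η = ∑ s, (mu s y : ℝ) * (Real.log (pEta mu η s) + 1) := by
  have h := hasDerivAt_sum_mul_log_affine (pEta mu η) (fun s => (mu s y : ℝ)) (η y) hU
  simp only [← phi_update hmu_nle] at h
  exact h.deriv

lemma eventually_pEta_update_pos (hmu_nle : ∀ x y : S, ¬ x ≤ y → mu x y = 0)
    {η : {x : S // x ≠ ⊥} → ℝ} (hU : ∀ s, 0 < pEta mu η s) (x : {x : S // x ≠ ⊥}) :
    ∀ᶠ t in 𝓝 (η x), ∀ s, 0 < pEta mu (Function.update η x t) s := by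
  refine eventually_all.2 fun s => ?_
  have hline := (hasDerivAt_add_mul_sub (pEta mu η s) (mu s x) (η x)).continuousAt
  filter_upwards [hline.eventually (eventually_gt_nhds (by simpa using hU s))] with t ht
  rwa [pEta_update hmu_nle]

end Moebius

theorem hasDerivAt_pd_phi_general {S : Type*} [Fintype S] [PartialOrder S] [OrderBot S]
    [DecidableEq S] [DecidableRel ((· ≤ ·) : S → S → Prop)]
    (mu : S → S → ℤ)
    (hmu_nle : ∀ x y : S, ¬ x ≤ y → mu x y = 0)
    (η : {x : S // x ≠ ⊥} → ℝ) (hU : ∀ s : S, 0 < pEta mu η s) (x y : {x : S // x ≠ ⊥}) :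
    HasDerivAt (fun t => pd (phi mu) y (Function.update η x t))
      (∑ s : S, (mu s (x : S) : ℝ) * (mu s (y : S) : ℝ) * (pEta mu η s)⁻¹)
      (η x) := by
  have hpd : (fun t => pd (phi mu) y (Function.update η x t)) =ᶠ[𝓝 (η x)]
      fun t => ∑ s, (mu s y : ℝ) * (Real.log (pEta mu η s + mu s x * (t - η x)) + 1) := by
    filter_upwards [eventually_pEta_update_pos hmu_nle hU x] with t ht
    simp only [pd_phi hmu_nle ht, pEta_update hmu_nle]
  exact (hasDerivAt_sum_mul_log_add_one_affine (pEta mu η) (fun s => (mu s x : ℝ)) (η x)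
    (fun s => (mu s y : ℝ)) hU).congr_of_eventuallyEq hpd

/-- (Theorem 3, η-coordinates) The second partial derivative of `φ` satisfies
`∂²φ(η)/∂η(x)∂η(y) = Σ_{s∈S} μ(s,x) μ(s,y) p_η(s)⁻¹` for every `η ∈ U`. -/
theorem hasDerivAt_pd_phi {S : Type*} [Fintype S] [PartialOrder S] [OrderBot S]
    [DecidableEq S] [DecidableRel ((· ≤ ·) : S → S → Prop)]
    (mu : S → S → ℤ)
    (hmu_self : ∀ x : S, mu x x = 1)
    (hmu_lt : ∀ x y : S, x < y →
      mu x y = -∑ s ∈ Finset.univ.filter (fun s => x ≤ s ∧ s < y), mu x s)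
    (hmu_nle : ∀ x y : S, ¬ x ≤ y → mu x y = 0)
    (η : {x : S // x ≠ ⊥} → ℝ) (hU : ∀ s : S, 0 < pEta mu η s) (x y : {x : S // x ≠ ⊥}) :
    HasDerivAt (fun t => pd (phi mu) y (Function.update η x t))
      (∑ s : S, (mu s (x : S) : ℝ) * (mu s (y : S) : ℝ) * (pEta mu η s)⁻¹)
      (η x) :=
  hasDerivAt_pd_phi_general mu hmu_nle η hU x y
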